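/- Let I ⊆ ℝ be an interval, γ = (γ₁,γ₂) : I → ℝ² a C¹ curve, h₀ : I → ℝ a function, and g₀ = (x₀,y₀,t₀) ∈ ℝ³. Then for all s ∈ I and r ∈ ℝ the following identity holds in the Heisenberg group H^1 = ℝ³ with group law (x,y,t)∘(x',y',t') = (x+x', y+y', t+t'+(xy'−x'y)/2): g₀ ∘ (γ₁(s)+rγ₂'(s), γ₂(s)−rγ₁'(s), h₀(s) − (r/2)·γ(s)·γ'(s)) = (γ̂₁(s)+rγ̂₂'(s), γ̂₂(s)−rγ̂₁'(s), t₀ + ĥ₀(s) − (r/2)·γ̂(s)·γ̂'(s)), where γ̂(s) = (x₀+γ₁(s), y₀+γ₂(s)) and ĥ₀(s) = h₀(s) + (x₀/2)γ₂(s) − (y₀/2)γ₁(s), and · denotes the Euclidean inner product of ℝ². -/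
import Mathlib

/-- The Heisenberg group law on `ℝ³`. -/
noncomputable def hmul (g g' : ℝ × ℝ × ℝ) : ℝ × ℝ × ℝ :=
  (g.1 + g'.1, g.2.1 + g'.2.1, g.2.2 + g'.2.2 + (g.1 * g'.2.1 - g'.1 * g.2.1) / 2)

/-- left-translating the seed-curve parameterization of an H-minimal patch by
`g₀ = (x₀,y₀,t₀)` yields a patch of the same form with seed curve
`γ̂ = (x₀+γ₁, y₀+γ₂)` and height function `ĥ₀ = h₀ + (x₀/2)γ₂ − (y₀/2)γ₁`. -/
theorem stmt14 (I : Set ℝ) (γ₁ γ₂ h₀ : ℝ → ℝ)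
    (hγ₁ : ContDiff ℝ 1 γ₁) (hγ₂ : ContDiff ℝ 1 γ₂) (x₀ y₀ t₀ : ℝ) :
    ∀ s ∈ I, ∀ r : ℝ,
      hmul (x₀, y₀, t₀)
        (γ₁ s + r * deriv γ₂ s, γ₂ s - r * deriv γ₁ s,
          h₀ s - r / 2 * (γ₁ s * deriv γ₁ s + γ₂ s * deriv γ₂ s))
      = ((x₀ + γ₁ s) + r * deriv (fun s' => y₀ + γ₂ s') s,
         (y₀ + γ₂ s) - r * deriv (fun s' => x₀ + γ₁ s') s,
         t₀ + (h₀ s + x₀ / 2 * γ₂ s - y₀ / 2 * γ₁ s)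
           - r / 2 * ((x₀ + γ₁ s) * deriv (fun s' => x₀ + γ₁ s') s
                      + (y₀ + γ₂ s) * deriv (fun s' => y₀ + γ₂ s') s)) := by
  intro s hs r
  have h1 : deriv (fun s' => x₀ + γ₁ s') s = deriv γ₁ s := by
    rw [deriv_const_add]
  have h2 : deriv (fun s' => y₀ + γ₂ s') s = deriv γ₂ s := by
    rw [deriv_const_add]
  simp only [hmul, h1, h2, Prod.mk.injEq]
  refine ⟨by ring, by ring, by ring⟩
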